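/- There exists an edge-to-edge tiling of ℝ² by isometric copies of the isosceles right triangle T₀ with legs of length 1, each tile of the form z + R(T₀) with R a rotation by an integer multiple of π/2 and z ∈ ℝ² (four orientations, no reflections), with the following two properties: (1) the tiling has no nonzero translation period; (2) every finite patch recurs infinitely often, i.e., for every finite subfamily P of the tiling, the set of vectors v ∈ ℝ² such that {v + A : A ∈ P} is again a subfamily of the tiling is infinite. -/

import Mathlib

/-- Rotation of the plane about the origin by `k` quarter turns (angle `k·π/2`). -/
noncomputable def rotk (k : ℤ) : ℝ × ℝ → ℝ × ℝ := fun p =>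
  (Real.cos (k * (Real.pi / 2)) * p.1 - Real.sin (k * (Real.pi / 2)) * p.2,
   Real.sin (k * (Real.pi / 2)) * p.1 + Real.cos (k * (Real.pi / 2)) * p.2)

/-- The closed isosceles right triangle with vertices (0,0), (1,0), (0,1). -/
def T0 : Set (ℝ × ℝ) := {p | 0 ≤ p.1 ∧ 0 ≤ p.2 ∧ p.1 + p.2 ≤ 1}

/-- The tile `z + R(T₀)` where `R` is rotation by `k·π/2`. -/
noncomputable def tile (k : ℤ) (z : ℝ × ℝ) : Set (ℝ × ℝ) :=
  (fun p => z + rotk k p) '' T0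

/-- Translate a subset of the plane by the vector `v`. -/
def translateSet (v : ℝ × ℝ) (A : Set (ℝ × ℝ)) : Set (ℝ × ℝ) :=
  (fun x => v + x) '' A

/-- `v` is a translation period of the family `F`: `{v + A : A ∈ F} = F`. -/
def IsPeriod (v : ℝ × ℝ) (F : Set (Set (ℝ × ℝ))) : Prop :=
  translateSet v '' F = F

/-- `p` is a vertex of the tile `A` (a rotated translate of `T₀`). -/
noncomputable def IsVertexOf (p : ℝ × ℝ) (A : Set (ℝ × ℝ)) : Prop :=
  ∃ k : ℤ, ∃ z : ℝ × ℝ, A = tile k z ∧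
    (p = z + rotk k (0, 0) ∨ p = z + rotk k (1, 0) ∨ p = z + rotk k (0, 1))

/-- `e` is a (closed) edge of the tile `A` (a rotated translate of `T₀`). -/
noncomputable def IsEdgeOf (e : Set (ℝ × ℝ)) (A : Set (ℝ × ℝ)) : Prop :=
  ∃ k : ℤ, ∃ z : ℝ × ℝ, A = tile k z ∧
    (e = segment ℝ (z + rotk k (0, 0)) (z + rotk k (1, 0)) ∨
     e = segment ℝ (z + rotk k (0, 0)) (z + rotk k (0, 1)) ∨
     e = segment ℝ (z + rotk k (1, 0)) (z + rotk k (0, 1)))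

/-- A family of triangular tiles is edge-to-edge if any two distinct tiles meet
in nothing, in a single common vertex, or in a full common edge. -/
noncomputable def EdgeToEdge (F : Set (Set (ℝ × ℝ))) : Prop :=
  ∀ A ∈ F, ∀ B ∈ F, A ≠ B →
    A ∩ B = ∅ ∨
    (∃ p, IsVertexOf p A ∧ IsVertexOf p B ∧ A ∩ B = {p}) ∨
    (∃ e, IsEdgeOf e A ∧ IsEdgeOf e B ∧ A ∩ B = e)

/-!
Cut every unit square `[m, m + 1] × [n, n + 1]` of the integer grid along one of its two
diagonals. Whatever the choice `d m n`, this is an edge-to-edge tiling by the four rotated copies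
of `T₀`: two tiles meet along their common diagonal, along a common side of adjacent squares, in a
common corner, or not at all. A period of such a tiling is an integer vector `(i, j)` with
`d (m + i) (n + j) = d m n`, and a patch inside the squares `|m|, |n| ≤ N` reappears after every
integer translation that preserves `d` on that window.

Take `d m n = w m xor w n`, where `w m` records whether `⌊(m + 1) α⌋ > ⌊m α⌋` for the irrational
slope `α = √2 - 1` (a Sturmian word). A period `(i, j)` would make `w` `2i`- and `2j`-periodic,
hence `⌊(m + p) α⌋ - ⌊m α⌋` constant, i.e. `fract (m α) + fract (p α) < 1` for all `m`, which the
density of `fract (m α)` forbids unless `p = 0`. On the other hand, whenever `fract (a α)` is small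
enough, `⌊(k + a) α⌋ = ⌊k α⌋ + ⌊a α⌋` on any given window, so `w (m + a) = w m` there, and by density
there are infinitely many such `a`: every patch recurs under the translations `(a, a)`.
-/

open Set
open scoped Pointwise

@[simp] lemma rotk_zero (p : ℝ × ℝ) : rotk 0 p = p := by
  simp [rotk]

@[simp] lemma rotk_one (p : ℝ × ℝ) : rotk 1 p = (-p.2, p.1) := by
  simp [rotk]

@[simp] lemma rotk_two (p : ℝ × ℝ) : rotk 2 p = (-p.1, -p.2) := by
  simp [rotk, show (2 : ℝ) * (Real.pi / 2) = Real.pi by ring]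

@[simp] lemma rotk_three (p : ℝ × ℝ) : rotk 3 p = (p.2, -p.1) := by
  simp [rotk, show (3 : ℝ) * (Real.pi / 2) = Real.pi / 2 + Real.pi by ring,
    Real.cos_add, Real.sin_add]

lemma rotk_neg_rotk (k : ℤ) (q : ℝ × ℝ) : rotk (-k) (rotk k q) = q := by
  have h := Real.sin_sq_add_cos_sq (k * (Real.pi / 2))
  ext <;> simp only [rotk, Int.cast_neg, neg_mul, Real.cos_neg, Real.sin_neg]
  · linear_combination q.1 * h
  · linear_combination q.2 * h

lemma mem_tile_iff {k : ℤ} {z p : ℝ × ℝ} : p ∈ tile k z ↔ rotk (-k) (p - z) ∈ T0 := by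
  constructor
  · rintro ⟨q, hq, rfl⟩
    simpa [rotk_neg_rotk] using hq
  · intro hp
    refine ⟨_, hp, ?_⟩
    have h := rotk_neg_rotk (-k) (p - z)
    rw [neg_neg] at h
    simp [h]

lemma translateSet_tile (v : ℝ × ℝ) (k : ℤ) (z : ℝ × ℝ) :
    translateSet v (tile k z) = tile k (v + z) := by
  simp only [translateSet, tile, image_image, add_assoc]

lemma convex_T0 : Convex ℝ T0 := by
  rintro p ⟨hp₁, hp₂, hp₃⟩ q ⟨hq₁, hq₂, hq₃⟩ s t hs ht hst
  refine ⟨?_, ?_, ?_⟩ <;>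
    simp only [Prod.fst_add, Prod.snd_add, Prod.smul_fst, Prod.smul_snd, smul_eq_mul] <;>
    nlinarith

lemma convex_tile (k : ℤ) (z : ℝ × ℝ) : Convex ℝ (tile k z) := by
  have hlin : IsLinearMap ℝ (rotk k) :=
    ⟨fun p q => by ext <;> simp [rotk] <;> ring, fun t p => by ext <;> simp [rotk] <;> ring⟩
  have htile : tile k z = z +ᵥ rotk k '' T0 := by
    rw [← image_vadd, image_image]
    rfl
  exact htile ▸ (convex_T0.is_linear_image hlin).vadd z

def tileVertices (k : ℤ) (z : ℝ × ℝ) : Set (ℝ × ℝ) :=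
  {z + rotk k (0, 0), z + rotk k (1, 0), z + rotk k (0, 1)}

lemma isVertexOf_tile {k : ℤ} {z p : ℝ × ℝ} (hp : p ∈ tileVertices k z) :
    IsVertexOf p (tile k z) :=
  ⟨k, z, rfl, hp⟩

lemma isEdgeOf_tile {k : ℤ} {z p q : ℝ × ℝ} (hp : p ∈ tileVertices k z)
    (hq : q ∈ tileVertices k z) (hpq : p ≠ q) : IsEdgeOf (segment ℝ p q) (tile k z) := by
  refine ⟨k, z, rfl, ?_⟩
  rcases hp with rfl | rfl | rfl <;> rcases hq with rfl | rfl | rfl <;>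
    simp_all [segment_symm]

lemma interior_segment_eq_empty {E : Type*} [NormedAddCommGroup E] [NormedSpace ℝ E]
    [FiniteDimensional ℝ E] (hE : 2 ≤ Module.finrank ℝ E) (p q : E) :
    interior (segment ℝ p q) = ∅ := by
  by_contra h
  have hspan := (convex_segment p q).interior_nonempty_iff_affineSpan_eq_top.1
    (nonempty_iff_ne_empty.2 h)
  have hsub : affineSpan ℝ (segment ℝ p q) ≤ line[ℝ, p, q] :=
    affineSpan_le.2 fun x hx => (mem_segment_iff_wbtw.1 hx).mem_affineSpan
  have htop : line[ℝ, p, q] = ⊤ := top_le_iff.1 (hspan ▸ hsub)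
  have hline := collinear_iff_finrank_le_one.1 (collinear_pair ℝ p q)
  rw [← direction_affineSpan, htop, AffineSubspace.direction_top, finrank_top] at hline
  omega

-- The four halves of the unit square with lower-left corner `(a, b)`, named after the corner at
-- their right angle.
noncomputable def halfSW (a b : ℝ) : Set (ℝ × ℝ) := tile 0 (a, b)
noncomputable def halfSE (a b : ℝ) : Set (ℝ × ℝ) := tile 1 (a + 1, b)
noncomputable def halfNE (a b : ℝ) : Set (ℝ × ℝ) := tile 2 (a + 1, b + 1)
noncomputable def halfNW (a b : ℝ) : Set (ℝ × ℝ) := tile 3 (a, b + 1)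

section HalfSquares

variable {a b : ℝ} {p : ℝ × ℝ}

lemma mem_halfSW : p ∈ halfSW a b ↔ a ≤ p.1 ∧ b ≤ p.2 ∧ p.1 + p.2 ≤ a + b + 1 := by
  rw [halfSW, mem_tile_iff]
  simp [T0]
  grind

lemma mem_halfSE : p ∈ halfSE a b ↔ p.1 ≤ a + 1 ∧ b ≤ p.2 ∧ p.2 - b ≤ p.1 - a := by
  rw [halfSE, mem_tile_iff]
  simp [T0, rotk, show (-1 : ℝ) * (Real.pi / 2) = -(Real.pi / 2) by ring]
  grind

lemma mem_halfNE : p ∈ halfNE a b ↔ p.1 ≤ a + 1 ∧ p.2 ≤ b + 1 ∧ a + b + 1 ≤ p.1 + p.2 := by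
  rw [halfNE, mem_tile_iff]
  simp [T0, rotk, show (-2 : ℝ) * (Real.pi / 2) = -Real.pi by ring]
  grind

lemma mem_halfNW : p ∈ halfNW a b ↔ a ≤ p.1 ∧ p.2 ≤ b + 1 ∧ p.1 - a ≤ p.2 - b := by
  rw [halfNW, mem_tile_iff]
  simp [T0, rotk, show (-3 : ℝ) * (Real.pi / 2) = -(Real.pi / 2 + Real.pi) by ring,
    Real.cos_add, Real.sin_add]
  grind

lemma inter_halfSW_halfNE_subset :
    halfSW a b ∩ halfNE a b ⊆ segment ℝ (a + 1, b) (a, b + 1) := by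
  rintro z ⟨hSW, hNE⟩
  obtain ⟨-, h₁, h₂⟩ := mem_halfSW.1 hSW
  obtain ⟨-, h₃, h₄⟩ := mem_halfNE.1 hNE
  convert lineMap_mem_segment ℝ _ _ (t := z.2 - b) ⟨by linarith, by linarith⟩ using 1
  ext <;> simp [AffineMap.lineMap_apply]
  linarith

lemma inter_halfSE_halfNW_subset :
    halfSE a b ∩ halfNW a b ⊆ segment ℝ (a, b) (a + 1, b + 1) := by
  rintro z ⟨hSE, hNW⟩
  obtain ⟨h₁, -, h₂⟩ := mem_halfSE.1 hSE
  obtain ⟨h₃, -, h₄⟩ := mem_halfNW.1 hNW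
  convert lineMap_mem_segment ℝ _ _ (t := z.1 - a) ⟨by linarith, by linarith⟩ using 1
  ext <;> simp [AffineMap.lineMap_apply]
  linarith

end HalfSquares

def unitSquare (a b : ℝ) : Set (ℝ × ℝ) := Icc a (a + 1) ×ˢ Icc b (b + 1)

def IsSquareCorner (p : ℝ × ℝ) (a b : ℝ) : Prop :=
  (p.1 = a ∨ p.1 = a + 1) ∧ (p.2 = b ∨ p.2 = b + 1)

noncomputable def halves : Bool → ℝ → ℝ → Set (Set (ℝ × ℝ))
  | false, a, b => {halfSW a b, halfNE a b}
  | true, a, b => {halfSE a b, halfNW a b}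

section Halves

variable {A : Set (ℝ × ℝ)} {c c' : Bool} {a b a' b' x y : ℝ} {p q : ℝ × ℝ}

lemma subset_unitSquare_of_mem_halves (hA : A ∈ halves c a b) : A ⊆ unitSquare a b := by
  intro p hp
  cases c <;> rcases hA with rfl | rfl <;>
    simp only [mem_halfSW, mem_halfSE, mem_halfNE, mem_halfNW] at hp <;>
    exact ⟨⟨by linarith, by linarith⟩, by linarith, by linarith⟩

lemma unitSquare_subset_sUnion_halves (c : Bool) (a b : ℝ) :
    unitSquare a b ⊆ ⋃₀ halves c a b := by
  rintro p ⟨⟨h₁, h₂⟩, h₃, h₄⟩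
  cases c
  · rcases le_total (p.1 + p.2) (a + b + 1) with h | h
    · exact ⟨_, Or.inl rfl, mem_halfSW.2 ⟨h₁, h₃, h⟩⟩
    · exact ⟨_, Or.inr rfl, mem_halfNE.2 ⟨h₂, h₄, h⟩⟩
  · rcases le_total (p.2 - b) (p.1 - a) with h | h
    · exact ⟨_, Or.inl rfl, mem_halfSE.2 ⟨h₂, h₃, h⟩⟩
    · exact ⟨_, Or.inr rfl, mem_halfNW.2 ⟨h₁, h₄, h⟩⟩

lemma exists_tile_of_mem_halves (hA : A ∈ halves c a b) :
    ∃ k z, A = tile k z ∧ ∀ p, IsSquareCorner p a b → p ∈ A → p ∈ tileVertices k z := by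
  cases c <;> rcases hA with rfl | rfl <;> refine ⟨_, _, rfl, ?_⟩ <;>
    rintro ⟨x, y⟩ ⟨rfl | rfl, rfl | rfl⟩ hp <;>
    simp only [mem_halfSW, mem_halfSE, mem_halfNE, mem_halfNW] at hp <;>
    simp [tileVertices] <;> linarith [hp.1, hp.2.1, hp.2.2]

lemma isVertexOf_of_mem_halves (hA : A ∈ halves c a b) (hp : IsSquareCorner p a b)
    (hpA : p ∈ A) : IsVertexOf p A := by
  obtain ⟨k, z, rfl, hV⟩ := exists_tile_of_mem_halves hA
  exact isVertexOf_tile (hV p hp hpA)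

lemma isEdgeOf_of_mem_halves (hA : A ∈ halves c a b) (hp : IsSquareCorner p a b)
    (hq : IsSquareCorner q a b) (hpA : p ∈ A) (hqA : q ∈ A) (hpq : p ≠ q) :
    IsEdgeOf (segment ℝ p q) A := by
  obtain ⟨k, z, rfl, hV⟩ := exists_tile_of_mem_halves hA
  exact isEdgeOf_tile (hV p hp hpA) (hV q hq hqA) hpq

lemma convex_of_mem_halves (hA : A ∈ halves c a b) : Convex ℝ A := by
  obtain ⟨k, z, rfl, -⟩ := exists_tile_of_mem_halves hA
  exact convex_tile k z

lemma translateSet_mem_halves (hA : A ∈ halves c a b) (v : ℝ × ℝ) :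
    translateSet v A ∈ halves c (a + v.1) (b + v.2) := by
  cases c <;> rcases hA with rfl | rfl <;>
    simp only [halves, halfSW, halfSE, halfNE, halfNW, translateSet_tile]
  all_goals first
    | exact Or.inl (congrArg _ (Prod.ext (by simp; ring) (by simp; ring)))
    | exact Or.inr (congrArg _ (Prod.ext (by simp; ring) (by simp; ring)))

lemma inter_vertical_side_of_mem_halves (hA : A ∈ halves c a b) (hx : x = a ∨ x = a + 1) :
    ((x, b) ∈ A ∧ (x, b + 1) ∈ A) ∨ A ∩ segment ℝ (x, b) (x, b + 1) ⊆ {(x, b)} ∨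
      A ∩ segment ℝ (x, b) (x, b + 1) ⊆ {(x, b + 1)} := by
  simp only [subset_def, mem_inter_iff, segment_eq_image', mem_image, mem_singleton_iff,
    Prod.ext_iff]
  cases c <;> rcases hA with rfl | rfl <;> rcases hx with rfl | rfl <;>
    simp only [mem_halfSW, mem_halfSE, mem_halfNE, mem_halfNW] <;>
    first
    | exact Or.inl ⟨⟨by linarith, by linarith, by linarith⟩, by linarith, by linarith, by linarith⟩
    | (right; left; rintro z ⟨hz, t, -, h₁, h₂⟩; simp at hz h₁ h₂ ⊢; constructor <;> nlinarith)
    | (right; right; rintro z ⟨hz, t, -, h₁, h₂⟩; simp at hz h₁ h₂ ⊢; constructor <;> nlinarith)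

lemma inter_horizontal_side_of_mem_halves (hA : A ∈ halves c a b) (hy : y = b ∨ y = b + 1) :
    ((a, y) ∈ A ∧ (a + 1, y) ∈ A) ∨ A ∩ segment ℝ (a, y) (a + 1, y) ⊆ {(a, y)} ∨
      A ∩ segment ℝ (a, y) (a + 1, y) ⊆ {(a + 1, y)} := by
  simp only [subset_def, mem_inter_iff, segment_eq_image', mem_image, mem_singleton_iff,
    Prod.ext_iff]
  cases c <;> rcases hA with rfl | rfl <;> rcases hy with rfl | rfl <;>
    simp only [mem_halfSW, mem_halfSE, mem_halfNE, mem_halfNW] <;>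
    first
    | exact Or.inl ⟨⟨by linarith, by linarith, by linarith⟩, by linarith, by linarith, by linarith⟩
    | (right; left; rintro z ⟨hz, t, -, h₁, h₂⟩; simp at hz h₁ h₂ ⊢; constructor <;> nlinarith)
    | (right; right; rintro z ⟨hz, t, -, h₁, h₂⟩; simp at hz h₁ h₂ ⊢; constructor <;> nlinarith)

lemma exists_mem_fst_eq_and_snd_eq (hA : A ∈ halves c a b) :
    (∃ p ∈ A, p.1 = a) ∧ ∃ p ∈ A, p.2 = b := by
  cases c <;> rcases hA with rfl | rfl
  · exact ⟨⟨(a, b), mem_halfSW.2 (by simp), rfl⟩, (a, b), mem_halfSW.2 (by simp), rfl⟩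
  · exact ⟨⟨(a, b + 1), mem_halfNE.2 (by simp; linarith), rfl⟩,
      (a + 1, b), mem_halfNE.2 (by simp; linarith), rfl⟩
  · exact ⟨⟨(a, b), mem_halfSE.2 (by simp), rfl⟩, (a, b), mem_halfSE.2 (by simp), rfl⟩
  · exact ⟨⟨(a, b), mem_halfNW.2 (by simp), rfl⟩, (a, b), mem_halfNW.2 (by simp), rfl⟩

lemma diagonal_mem_iff_of_mem_halves (hA : A ∈ halves c a b) :
    ((a, b) ∈ A ∧ (a + 1, b + 1) ∈ A) ↔ c = true := by
  cases c <;> rcases hA with rfl | rfl <;>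
    simp [mem_halfSW, mem_halfSE, mem_halfNE, mem_halfNW]
  linarith

lemma eq_of_mem_halves (hA : A ∈ halves c a b) (hA' : A ∈ halves c' a' b') :
    c = c' ∧ a = a' ∧ b = b' := by
  obtain ⟨⟨p, hp, hp₁⟩, q, hq, hq₂⟩ := exists_mem_fst_eq_and_snd_eq hA
  obtain ⟨⟨p', hp', hp₁'⟩, q', hq', hq₂'⟩ := exists_mem_fst_eq_and_snd_eq hA'
  have h₁ := subset_unitSquare_of_mem_halves hA' hp
  have h₂ := subset_unitSquare_of_mem_halves hA hp'
  have h₃ := subset_unitSquare_of_mem_halves hA' hq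
  have h₄ := subset_unitSquare_of_mem_halves hA hq'
  simp only [unitSquare, mem_prod, mem_Icc] at h₁ h₂ h₃ h₄
  obtain rfl : a = a' := by linarith
  obtain rfl : b = b' := by linarith
  exact ⟨Bool.eq_iff_iff.2
    ((diagonal_mem_iff_of_mem_halves hA).symm.trans (diagonal_mem_iff_of_mem_halves hA')), rfl, rfl⟩

end Halves

def MeetEdgeToEdge (A B : Set (ℝ × ℝ)) : Prop :=
  A ∩ B = ∅ ∨ (∃ p, IsVertexOf p A ∧ IsVertexOf p B ∧ A ∩ B = {p}) ∨
    ∃ e, IsEdgeOf e A ∧ IsEdgeOf e B ∧ A ∩ B = e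

section MeetEdgeToEdge

variable {A B : Set (ℝ × ℝ)} {c c' : Bool} {a b a' b' : ℝ} {p q : ℝ × ℝ}

lemma MeetEdgeToEdge.symm (h : MeetEdgeToEdge A B) : MeetEdgeToEdge B A := by
  rw [MeetEdgeToEdge, inter_comm] at h
  rcases h with h | ⟨p, hA, hB, h⟩ | ⟨e, hA, hB, h⟩
  exacts [Or.inl h, Or.inr (Or.inl ⟨p, hB, hA, h⟩), Or.inr (Or.inr ⟨e, hB, hA, h⟩)]

lemma MeetEdgeToEdge.interior_inter_eq_empty (h : MeetEdgeToEdge A B) :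
    interior A ∩ interior B = ∅ := by
  rw [← interior_inter]
  rcases h with h | ⟨p, -, -, h⟩ | ⟨e, ⟨k, z, -, he⟩, -, h⟩
  · rw [h, interior_empty]
  · rw [h, interior_singleton]
  · rw [h]
    rcases he with rfl | rfl | rfl <;> exact interior_segment_eq_empty (by simp) _ _

lemma EdgeToEdge.interior_inter_eq_empty {F : Set (Set (ℝ × ℝ))} (hF : EdgeToEdge F) :
    ∀ A ∈ F, ∀ B ∈ F, A ≠ B → interior A ∩ interior B = ∅ := fun A hA B hB hAB =>
  MeetEdgeToEdge.interior_inter_eq_empty (hF A hA B hB hAB)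

lemma meetEdgeToEdge_of_inter_subset_singleton (hA : A ∈ halves c a b)
    (hB : B ∈ halves c' a' b') (hp : IsSquareCorner p a b) (hp' : IsSquareCorner p a' b')
    (hAB : A ∩ B ⊆ {p}) : MeetEdgeToEdge A B := by
  by_cases hpAB : p ∈ A ∩ B
  · exact Or.inr (Or.inl ⟨p, isVertexOf_of_mem_halves hA hp hpAB.1,
      isVertexOf_of_mem_halves hB hp' hpAB.2, hAB.antisymm (singleton_subset_iff.2 hpAB)⟩)
  · exact Or.inl (subset_empty_iff.1 fun z hz => hpAB (mem_singleton_iff.1 (hAB hz) ▸ hz))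

lemma meetEdgeToEdge_of_inter_subset_segment (hA : A ∈ halves c a b)
    (hB : B ∈ halves c' a' b') (hp : IsSquareCorner p a b) (hq : IsSquareCorner q a b)
    (hp' : IsSquareCorner p a' b') (hq' : IsSquareCorner q a' b') (hpq : p ≠ q)
    (hAB : A ∩ B ⊆ segment ℝ p q)
    (hsA : (p ∈ A ∧ q ∈ A) ∨ A ∩ segment ℝ p q ⊆ {p} ∨ A ∩ segment ℝ p q ⊆ {q})
    (hsB : (p ∈ B ∧ q ∈ B) ∨ B ∩ segment ℝ p q ⊆ {p} ∨ B ∩ segment ℝ p q ⊆ {q}) :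
    MeetEdgeToEdge A B := by
  have hA' : ∀ r, A ∩ segment ℝ p q ⊆ {r} → A ∩ B ⊆ {r} :=
    fun r h z hz => h ⟨hz.1, hAB hz⟩
  have hB' : ∀ r, B ∩ segment ℝ p q ⊆ {r} → A ∩ B ⊆ {r} :=
    fun r h z hz => h ⟨hz.2, hAB hz⟩
  rcases hsA with ⟨hpA, hqA⟩ | h | h
  · rcases hsB with ⟨hpB, hqB⟩ | h | h
    · refine Or.inr (Or.inr ⟨_, isEdgeOf_of_mem_halves hA hp hq hpA hqA hpq,
        isEdgeOf_of_mem_halves hB hp' hq' hpB hqB hpq, hAB.antisymm ?_⟩)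
      exact subset_inter ((convex_of_mem_halves hA).segment_subset hpA hqA)
        ((convex_of_mem_halves hB).segment_subset hpB hqB)
    · exact meetEdgeToEdge_of_inter_subset_singleton hA hB hp hp' (hB' p h)
    · exact meetEdgeToEdge_of_inter_subset_singleton hA hB hq hq' (hB' q h)
  · exact meetEdgeToEdge_of_inter_subset_singleton hA hB hp hp' (hA' p h)
  · exact meetEdgeToEdge_of_inter_subset_singleton hA hB hq hq' (hA' q h)

lemma meetEdgeToEdge_of_mem_halves_same (hA : A ∈ halves c a b) (hB : B ∈ halves c a b)
    (hAB : A ≠ B) : MeetEdgeToEdge A B := by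
  have hSWNE : MeetEdgeToEdge (halfSW a b) (halfNE a b) :=
    meetEdgeToEdge_of_inter_subset_segment (c := false) (c' := false) (Or.inl rfl) (Or.inr rfl)
      ⟨.inr rfl, .inl rfl⟩ ⟨.inl rfl, .inr rfl⟩ ⟨.inr rfl, .inl rfl⟩ ⟨.inl rfl, .inr rfl⟩
      (by simp) inter_halfSW_halfNE_subset
      (Or.inl ⟨mem_halfSW.2 ⟨by linarith, by linarith, by linarith⟩,
        mem_halfSW.2 ⟨by linarith, by linarith, by linarith⟩⟩)
      (Or.inl ⟨mem_halfNE.2 ⟨by linarith, by linarith, by linarith⟩,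
        mem_halfNE.2 ⟨by linarith, by linarith, by linarith⟩⟩)
  have hSENW : MeetEdgeToEdge (halfSE a b) (halfNW a b) :=
    meetEdgeToEdge_of_inter_subset_segment (c := true) (c' := true) (Or.inl rfl) (Or.inr rfl)
      ⟨.inl rfl, .inl rfl⟩ ⟨.inr rfl, .inr rfl⟩ ⟨.inl rfl, .inl rfl⟩ ⟨.inr rfl, .inr rfl⟩
      (by simp) inter_halfSE_halfNW_subset
      (Or.inl ⟨mem_halfSE.2 (by simp), mem_halfSE.2 (by simp)⟩)
      (Or.inl ⟨mem_halfNW.2 (by simp), mem_halfNW.2 (by simp)⟩)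
  cases c <;> rcases hA with rfl | rfl <;> rcases hB with rfl | rfl
  all_goals first | exact absurd rfl hAB | assumption | exact MeetEdgeToEdge.symm ‹_›

lemma meetEdgeToEdge_of_mem_halves_right (hA : A ∈ halves c a b)
    (hB : B ∈ halves c' (a + 1) b) : MeetEdgeToEdge A B := by
  have hAB : A ∩ B ⊆ segment ℝ (a + 1, b) (a + 1, b + 1) := by
    rintro z ⟨hzA, hzB⟩
    obtain ⟨⟨-, h₁⟩, h₂, h₃⟩ := subset_unitSquare_of_mem_halves hA hzA
    obtain ⟨⟨h₄, -⟩, -⟩ := subset_unitSquare_of_mem_halves hB hzB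
    convert lineMap_mem_segment ℝ _ _ (t := z.2 - b) ⟨by linarith, by linarith⟩ using 1
    ext <;> simp [AffineMap.lineMap_apply]
    linarith
  exact meetEdgeToEdge_of_inter_subset_segment hA hB ⟨.inr rfl, .inl rfl⟩ ⟨.inr rfl, .inr rfl⟩
    ⟨.inl rfl, .inl rfl⟩ ⟨.inl rfl, .inr rfl⟩ (by simp) hAB
    (inter_vertical_side_of_mem_halves hA (.inr rfl))
    (inter_vertical_side_of_mem_halves hB (.inl rfl))

lemma meetEdgeToEdge_of_mem_halves_above (hA : A ∈ halves c a b)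
    (hB : B ∈ halves c' a (b + 1)) : MeetEdgeToEdge A B := by
  have hAB : A ∩ B ⊆ segment ℝ (a, b + 1) (a + 1, b + 1) := by
    rintro z ⟨hzA, hzB⟩
    obtain ⟨⟨h₁, h₂⟩, -, h₃⟩ := subset_unitSquare_of_mem_halves hA hzA
    obtain ⟨-, h₄, -⟩ := subset_unitSquare_of_mem_halves hB hzB
    convert lineMap_mem_segment ℝ _ _ (t := z.1 - a) ⟨by linarith, by linarith⟩ using 1
    ext <;> simp [AffineMap.lineMap_apply]
    linarith
  exact meetEdgeToEdge_of_inter_subset_segment hA hB ⟨.inl rfl, .inr rfl⟩ ⟨.inr rfl, .inr rfl⟩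
    ⟨.inl rfl, .inl rfl⟩ ⟨.inr rfl, .inl rfl⟩ (by simp) hAB
    (inter_horizontal_side_of_mem_halves hA (.inr rfl))
    (inter_horizontal_side_of_mem_halves hB (.inl rfl))

lemma meetEdgeToEdge_of_mem_halves {m n m' n' : ℤ} (hA : A ∈ halves c m n)
    (hB : B ∈ halves c' m' n') (hc : m = m' → n = n' → c = c') (hAB : A ≠ B) :
    MeetEdgeToEdge A B := by
  wlog h : m < m' ∨ m = m' ∧ n ≤ n' generalizing A B c c' m n m' n'
  · exact (this hB hA (fun h₁ h₂ => (hc h₁.symm h₂.symm).symm) hAB.symm (by omega)).symm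
  have hsq : ∀ z ∈ A ∩ B, z ∈ unitSquare m n ∧ z ∈ unitSquare m' n' := fun z hz =>
    ⟨subset_unitSquare_of_mem_halves hA hz.1, subset_unitSquare_of_mem_halves hB hz.2⟩
  obtain ⟨rfl, rfl⟩ | ⟨rfl, rfl⟩ | ⟨rfl, rfl⟩ | ⟨rfl, rfl⟩ | ⟨rfl, rfl⟩ | hfar :
      (m' = m ∧ n' = n) ∨ (m' = m ∧ n' = n + 1) ∨ (m' = m + 1 ∧ n' = n) ∨
      (m' = m + 1 ∧ n' = n + 1) ∨ (m' = m + 1 ∧ n' = n - 1) ∨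
      (m + 2 ≤ m' ∨ n + 2 ≤ n' ∨ n' + 2 ≤ n) := by omega
  · obtain rfl := hc rfl rfl
    exact meetEdgeToEdge_of_mem_halves_same hA hB hAB
  · push_cast at hB
    exact meetEdgeToEdge_of_mem_halves_above hA hB
  · push_cast at hB
    exact meetEdgeToEdge_of_mem_halves_right hA hB
  · push_cast at hB hsq
    refine meetEdgeToEdge_of_inter_subset_singleton hA hB (p := (m + 1, n + 1))
      ⟨.inr rfl, .inr rfl⟩ ⟨.inl rfl, .inl rfl⟩ fun z hz => ?_
    obtain ⟨⟨⟨-, h₁⟩, -, h₂⟩, ⟨h₃, -⟩, h₄, -⟩ := hsq z hz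
    exact Prod.ext (by simp; linarith) (by simp; linarith)
  · push_cast at hB hsq
    refine meetEdgeToEdge_of_inter_subset_singleton hA hB (p := (m + 1, n))
      ⟨.inr rfl, .inl rfl⟩ ⟨.inl rfl, by simp⟩ fun z hz => ?_
    obtain ⟨⟨⟨-, h₁⟩, h₂, -⟩, ⟨h₃, -⟩, -, h₄⟩ := hsq z hz
    exact Prod.ext (by simp; linarith) (by simp; linarith)
  · refine Or.inl (eq_empty_of_forall_notMem fun z hz => ?_)
    obtain ⟨⟨⟨h₁, h₂⟩, h₃, h₄⟩, ⟨h₅, h₆⟩, h₇, h₈⟩ := hsq z hz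
    rcases hfar with h | h | h <;> have := (Int.cast_le (R := ℝ)).2 h <;> push_cast at this <;>
      linarith

end MeetEdgeToEdge

noncomputable def squareTiling (d : ℤ → ℤ → Bool) : Set (Set (ℝ × ℝ)) :=
  ⋃ (m : ℤ) (n : ℤ), halves (d m n) m n

section SquareTiling

variable {d : ℤ → ℤ → Bool} {A : Set (ℝ × ℝ)}

lemma mem_squareTiling : A ∈ squareTiling d ↔ ∃ m n : ℤ, A ∈ halves (d m n) m n := by
  simp [squareTiling]

lemma countable_squareTiling (d : ℤ → ℤ → Bool) : (squareTiling d).Countable := by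
  refine countable_iUnion fun m => countable_iUnion fun n => ?_
  cases d m n <;> exact ((finite_singleton _).insert _).countable

lemma exists_tile_of_mem_squareTiling (hA : A ∈ squareTiling d) : ∃ k z, A = tile k z := by
  obtain ⟨m, n, hA⟩ := mem_squareTiling.1 hA
  obtain ⟨k, z, hkz, -⟩ := exists_tile_of_mem_halves hA
  exact ⟨k, z, hkz⟩

lemma sUnion_squareTiling (d : ℤ → ℤ → Bool) : ⋃₀ squareTiling d = univ := by
  refine eq_univ_of_forall fun p => ?_
  have hp : p ∈ unitSquare ⌊p.1⌋ ⌊p.2⌋ :=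
    ⟨⟨Int.floor_le _, (Int.lt_floor_add_one _).le⟩, Int.floor_le _, (Int.lt_floor_add_one _).le⟩
  obtain ⟨A, hA, hpA⟩ := unitSquare_subset_sUnion_halves (d ⌊p.1⌋ ⌊p.2⌋) _ _ hp
  exact ⟨A, mem_squareTiling.2 ⟨_, _, hA⟩, hpA⟩

lemma edgeToEdge_squareTiling (d : ℤ → ℤ → Bool) : EdgeToEdge (squareTiling d) := by
  intro A hA B hB hAB
  obtain ⟨m, n, hA⟩ := mem_squareTiling.1 hA
  obtain ⟨m', n', hB⟩ := mem_squareTiling.1 hB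
  exact meetEdgeToEdge_of_mem_halves hA hB (by rintro rfl rfl; rfl) hAB

lemma exists_int_of_isPeriod {v : ℝ × ℝ} (hv : IsPeriod v (squareTiling d)) :
    ∃ i j : ℤ, v = ((i : ℝ), (j : ℝ)) ∧ ∀ m n, d (m + i) (n + j) = d m n := by
  have key : ∀ m n : ℤ, ∃ m' n' : ℤ, d m n = d m' n' ∧ m + v.1 = m' ∧ n + v.2 = n' := by
    intro m n
    obtain ⟨A, hA⟩ : (halves (d m n) m n).Nonempty := by
      cases d m n
      exacts [⟨_, Or.inl rfl⟩, ⟨_, Or.inl rfl⟩]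
    have hvA : translateSet v A ∈ squareTiling d :=
      hv ▸ mem_image_of_mem _ (mem_squareTiling.2 ⟨m, n, hA⟩)
    obtain ⟨m', n', hA'⟩ := mem_squareTiling.1 hvA
    exact ⟨m', n', eq_of_mem_halves (translateSet_mem_halves hA v) hA'⟩
  obtain ⟨i, j, -, hi, hj⟩ := key 0 0
  simp only [Int.cast_zero, zero_add] at hi hj
  refine ⟨i, j, Prod.ext hi hj, fun m n => ?_⟩
  obtain ⟨m', n', hd, hm, hn⟩ := key m n
  rw [hi, ← Int.cast_add, Int.cast_inj] at hm
  rw [hj, ← Int.cast_add, Int.cast_inj] at hn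
  rw [hm, hn, hd]

lemma infinite_setOf_translateSet_image_subset {P : Set (Set (ℝ × ℝ))}
    (hP : P ⊆ squareTiling d) (hPfin : P.Finite)
    (hd : ∀ N : ℕ, {w : ℤ × ℤ | ∀ m n : ℤ, |m| ≤ N → |n| ≤ N →
      d (m + w.1) (n + w.2) = d m n}.Infinite) :
    {v : ℝ × ℝ | translateSet v '' P ⊆ squareTiling d}.Infinite := by
  have hev : ∀ᶠ N : ℕ in Filter.atTop, ∀ A ∈ P,
      ∃ m n : ℤ, |m| ≤ N ∧ |n| ≤ N ∧ A ∈ halves (d m n) m n := by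
    refine (Filter.eventually_all_finite hPfin).2 fun A hA => ?_
    obtain ⟨m, n, h⟩ := mem_squareTiling.1 (hP hA)
    filter_upwards [Filter.eventually_ge_atTop (max m.natAbs n.natAbs)] with N hN
    simp only [Int.abs_eq_natAbs]
    exact ⟨m, n, by omega, by omega, h⟩
  obtain ⟨N, hN⟩ := hev.exists
  have hcast : Function.Injective fun w : ℤ × ℤ => ((w.1 : ℝ), (w.2 : ℝ)) := fun w w' h => by
    simp only [Prod.mk.injEq, Int.cast_inj] at h
    exact Prod.ext h.1 h.2
  refine ((hd N).image hcast.injOn).mono ?_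
  rintro _ ⟨⟨i, j⟩, hij, rfl⟩ _ ⟨A, hA, rfl⟩
  obtain ⟨m, n, hm, hn, h⟩ := hN A hA
  have h' := translateSet_mem_halves h ((i : ℝ), (j : ℝ))
  rw [← hij m n hm hn] at h'
  exact mem_squareTiling.2 ⟨m + i, n + j, by push_cast; exact h'⟩

end SquareTiling

lemma Int.floor_add_eq_floor_add_floor_iff {R : Type*} [Ring R] [LinearOrder R]
    [IsStrictOrderedRing R] [FloorRing R] (x y : R) :
    ⌊x + y⌋ = ⌊x⌋ + ⌊y⌋ ↔ Int.fract x + Int.fract y < 1 := by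
  have h : x + y = (Int.fract x + Int.fract y) + ((⌊x⌋ + ⌊y⌋ : ℤ) : R) := by
    push_cast
    rw [Int.fract, Int.fract]
    abel
  rw [h, Int.floor_add_intCast, add_eq_right, Int.floor_eq_zero_iff]
  simp [add_nonneg (Int.fract_nonneg x) (Int.fract_nonneg y)]

section Sturmian

variable {α : ℝ}

lemma exists_fract_mem_Ioo (hα : Irrational α) {u v : ℝ} (hu : 0 ≤ u) (huv : u < v)
    (hv : v ≤ 1) : ∃ m : ℤ, Int.fract (m * α) ∈ Ioo u v := by
  have hdense : Dense (AddSubgroup.closure {α, 1} : Set ℝ) :=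
    dense_addSubgroupClosure_pair_iff.2 (by simpa using hα)
  obtain ⟨_, hx, hxuv⟩ := hdense.exists_between huv
  obtain ⟨m, n, rfl⟩ := AddSubgroup.mem_closure_pair.1 hx
  refine ⟨m, ?_⟩
  convert hxuv using 1
  rw [Int.fract_eq_iff]
  refine ⟨by linarith [hxuv.1], by linarith [hxuv.2], -n, ?_⟩
  simp

lemma infinite_setOf_fract_lt (hα : Irrational α) {ε : ℝ} (hε : 0 < ε) :
    {a : ℤ | Int.fract (a * α) < ε}.Infinite := by
  intro hfin
  -- on a finite set the positive values of `fract` are bounded below, by density they are not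
  obtain ⟨M, hM⟩ := (hfin.image fun a : ℤ => (Int.fract (a * α))⁻¹).bddAbove
  have hδ : 0 < min ε (1 / (|M| + 1)) := lt_min hε (by positivity)
  obtain ⟨m, hm0, hm⟩ := exists_fract_mem_Ioo hα le_rfl (lt_min hδ one_pos) (min_le_right _ _)
  have hmε : Int.fract (m * α) < ε := hm.trans_le ((min_le_left _ _).trans (min_le_left _ _))
  have hmM : Int.fract (m * α) < 1 / (|M| + 1) :=
    hm.trans_le ((min_le_left _ _).trans (min_le_right _ _))
  have := hM (mem_image_of_mem _ hmε)
  rw [lt_div_iff₀ (by positivity), ← lt_inv_mul_iff₀ hm0, mul_one] at hmM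
  linarith [le_abs_self M]

noncomputable def mechanicalWord (α : ℝ) (m : ℤ) : Bool :=
  ⌊((m : ℝ) + 1) * α⌋ = ⌊(m : ℝ) * α⌋ + 1

lemma floor_succ_mul_eq (h0 : 0 ≤ α) (h1 : α ≤ 1) (m : ℤ) :
    ⌊((m : ℝ) + 1) * α⌋ = ⌊(m : ℝ) * α⌋ + if mechanicalWord α m then 1 else 0 := by
  have hle : ⌊(m : ℝ) * α⌋ ≤ ⌊((m : ℝ) + 1) * α⌋ := Int.floor_mono (by nlinarith)
  have hge : ⌊((m : ℝ) + 1) * α⌋ ≤ ⌊(m : ℝ) * α⌋ + 1 := by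
    rw [← Int.floor_add_one]
    exact Int.floor_mono (by nlinarith)
  simp only [mechanicalWord, decide_eq_true_eq]
  split_ifs <;> omega

lemma mechanicalWord_not_periodic (hα : Irrational α) (h0 : 0 ≤ α) (h1 : α ≤ 1) {p : ℤ}
    (hp : p ≠ 0) : ¬ ∀ m, mechanicalWord α (m + p) = mechanicalWord α m := by
  intro hper
  -- a periodic jump sequence makes `⌊(m + p) α⌋ - ⌊m α⌋` independent of `m`
  set g : ℤ → ℤ := fun m => ⌊((m : ℝ) + p) * α⌋ - ⌊(m : ℝ) * α⌋ with hg_def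
  have hg : Function.Periodic g 1 := fun m => by
    have e₁ := floor_succ_mul_eq h0 h1 (m + p)
    have e₂ := floor_succ_mul_eq h0 h1 m
    rw [hper m] at e₁
    push_cast at e₁
    simp only [hg_def]
    push_cast
    rw [add_right_comm]
    omega
  have hadd : ∀ m : ℤ, Int.fract ((m : ℝ) * α) + Int.fract ((p : ℝ) * α) < 1 := fun m => by
    have := (hg.int_mul m) 0
    simp only [hg_def, Int.cast_id, zero_add, mul_one, Int.cast_zero, zero_mul, Int.floor_zero,
      sub_zero] at this
    rw [← Int.floor_add_eq_floor_add_floor_iff, ← add_mul]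
    omega
  have hpos : 0 < Int.fract ((p : ℝ) * α) :=
    Int.fract_pos.2 ((hα.intCast_mul hp).ne_int _)
  obtain ⟨m, hm, -⟩ := exists_fract_mem_Ioo hα (u := 1 - Int.fract ((p : ℝ) * α)) (v := 1)
    (by linarith [Int.fract_lt_one ((p : ℝ) * α)]) (by linarith) le_rfl
  linarith [hadd m]

lemma exists_pos_forall_mechanicalWord_add_eq (N : ℕ) : ∃ ε > 0, ∀ a : ℤ,
    Int.fract (a * α) < ε → ∀ m : ℤ, |m| ≤ N → mechanicalWord α (m + a) = mechanicalWord α m := by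
  have hev : ∀ᶠ ε in nhdsWithin (0 : ℝ) (Ioi 0),
      ∀ k ∈ Icc (-(N : ℤ)) (N + 1), Int.fract (k * α) + ε < 1 := by
    refine (Filter.eventually_all_finite (finite_Icc _ _)).2 fun k _ => ?_
    filter_upwards [Ioo_mem_nhdsGT (sub_pos.2 (Int.fract_lt_one (k * α)))] with ε hε
    linarith [hε.2]
  obtain ⟨ε, hW, hε⟩ := (hev.and self_mem_nhdsWithin).exists
  refine ⟨ε, hε, fun a ha m hm => ?_⟩
  have hadd : ∀ k ∈ Icc (-(N : ℤ)) (N + 1), ⌊((k : ℝ) + a) * α⌋ = ⌊(k : ℝ) * α⌋ + ⌊(a : ℝ) * α⌋ :=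
    fun k hk => by
      rw [add_mul, Int.floor_add_eq_floor_add_floor_iff]
      linarith [hW k hk]
  rw [abs_le] at hm
  have e₁ := hadd m ⟨by omega, by omega⟩
  have e₂ := hadd (m + 1) ⟨by omega, by omega⟩
  push_cast at e₂
  simp only [mechanicalWord, Int.cast_add, add_right_comm (m : ℝ) (a : ℝ) 1, e₁, e₂,
    decide_eq_decide]
  constructor <;> intro h <;> omega

lemma eq_zero_of_forall_xor_mechanicalWord_add (hα : Irrational α) (h0 : 0 ≤ α) (h1 : α ≤ 1)
    {i j : ℤ} (h : ∀ m n, xor (mechanicalWord α (m + i)) (mechanicalWord α (n + j)) =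
      xor (mechanicalWord α m) (mechanicalWord α n)) : i = 0 ∧ j = 0 := by
  set w := mechanicalWord α
  -- `xor (w (m + i)) (w m)` does not depend on `m`, so `w` is `2 i`-periodic
  have hi : ∀ m, w (m + (i + i)) = w m := fun m => by
    have h₁ := h m 0
    have h₂ := h (m + i) 0
    rw [← add_assoc]
    revert h₁ h₂
    cases w m <;> cases w (m + i) <;> cases w (m + i + i) <;> cases w (0 + j) <;> cases w 0 <;>
      decide
  have hj : ∀ n, w (n + (j + j)) = w n := fun n => by
    have h₁ := h 0 n
    have h₂ := h 0 (n + j)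
    rw [← add_assoc]
    revert h₁ h₂
    cases w n <;> cases w (n + j) <;> cases w (n + j + j) <;> cases w (0 + i) <;> cases w 0 <;>
      decide
  constructor
  · by_contra hi0
    exact mechanicalWord_not_periodic hα h0 h1 (by omega) hi
  · by_contra hj0
    exact mechanicalWord_not_periodic hα h0 h1 (by omega) hj

end Sturmian

/-- There is an edge-to-edge tiling of the plane by rotated translates of the
isosceles right triangle `T₀` (rotations by integer multiples of π/2 only, no
reflections) that has no nonzero translation period, yet in which every finite
patch recurs at infinitely many translations. -/
theorem exists_aperiodic_repetitive_one_triangle_tiling :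
    ∃ F : Set (Set (ℝ × ℝ)),
      F.Countable ∧
      (∀ A ∈ F, ∃ k : ℤ, ∃ z : ℝ × ℝ, A = tile k z) ∧
      ⋃₀ F = Set.univ ∧
      (∀ A ∈ F, ∀ B ∈ F, A ≠ B → interior A ∩ interior B = ∅) ∧
      EdgeToEdge F ∧
      (∀ v : ℝ × ℝ, IsPeriod v F → v = 0) ∧
      (∀ P ⊆ F, P.Finite → {v : ℝ × ℝ | translateSet v '' P ⊆ F}.Infinite) := by
  set α := √2 - 1
  have hα : Irrational α := by simpa using irrational_sqrt_two.sub_intCast 1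
  have h0 : 0 ≤ α := by linarith [Real.one_lt_sqrt_two]
  have h1 : α ≤ 1 := by linarith [Real.sqrt_two_lt_three_halves]
  set d : ℤ → ℤ → Bool := fun m n => xor (mechanicalWord α m) (mechanicalWord α n)
  refine ⟨squareTiling d, countable_squareTiling d, fun A hA => exists_tile_of_mem_squareTiling hA,
    sUnion_squareTiling d, (edgeToEdge_squareTiling d).interior_inter_eq_empty,
    edgeToEdge_squareTiling d, fun v hv => ?_, fun P hP hPfin => ?_⟩
  · obtain ⟨i, j, rfl, hij⟩ := exists_int_of_isPeriod hv
    obtain ⟨rfl, rfl⟩ := eq_zero_of_forall_xor_mechanicalWord_add hα h0 h1 hij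
    simp
  · refine infinite_setOf_translateSet_image_subset hP hPfin fun N => ?_
    obtain ⟨ε, hε, hwin⟩ := exists_pos_forall_mechanicalWord_add_eq (α := α) N
    refine ((infinite_setOf_fract_lt hα hε).image (f := fun a : ℤ => (a, a))
      fun a _ b _ h => congrArg Prod.fst h).mono ?_
    rintro _ ⟨a, ha, rfl⟩ m n hm hn
    simp [d, hwin a ha m hm, hwin a ha n hn]
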